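/- Let (X,B,η) be a finite, complete, separable, non-atomic measure space, U_ad = {u ∈ L^∞(X) : α ≤ u ≤ β a.e.}, and J : U_ad → ℝ weak* sequentially continuous. If ū ∈ U_ad is a local minimizer of J in L^1(X) that is not bang-bang, then there do NOT exist constants ν > 0, δ > 0, γ > 0 and p ∈ [1,∞] such that J(u) ≥ J(ū) + ν ‖u − ū‖_{L^p(X)}^γ for all u ∈ U_ad with ‖u − ū‖_{L^1(X)} < δ. -/

import Mathlib

/-!
Since `ū` is not bang-bang, it stays at distance `c > 0` from `α` and `β` on a set `E` of
positive measure, so `ū + ρ sₖ` is admissible for `0 < ρ ≤ c` and any `sₖ` with `|sₖ| = 1_E`.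
By Sierpiński's theorem a non-atomic measure takes every value between `0` and `μ A` on subsets
of `A`; by induction one gets `Bₖ ⊆ E` halving `E ∩ Sᵢ` for each `i < k`, where `(Sₙ)` is the
sequence given by separability. Then `sₖ = 2·1_{Bₖ} - 1_E` has vanishing integral over `Sₙ` for
`k > n`, and the density of `(Sₙ)` together with `|sₖ| ≤ 1` gives `sₖ ⇀* 0`. Hence
`J(ū + ρ sₖ) → J(ū)`, although `‖ρ sₖ‖_{L¹} = ρ μ(E)` can be made `< δ` while
`‖ρ sₖ‖_{Lᵖ} = ‖ρ 1_E‖_{Lᵖ} > 0` does not depend on `k`, contradicting the growth condition.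
-/

open MeasureTheory Filter Topology
open scoped ENNReal

/-- The admissible set `U_ad = {u ∈ L^∞(X) : α ≤ u ≤ β a.e.}`. -/
def Uad {X : Type*} [MeasurableSpace X] (μ : Measure X) (α β : ℝ) : Set (X → ℝ) :=
  {u | Measurable u ∧ ∀ᵐ x ∂μ, α ≤ u x ∧ u x ≤ β}

open Set
open scoped NNReal symmDiff

/-- Stronger than Mathlib's `NoAtoms`, which only asks singletons to be null. -/
def IsNonatomic {X : Type*} [MeasurableSpace X] (μ : Measure X) : Prop :=
  ∀ A : Set X, MeasurableSet A → 0 < μ A → ∃ C, C ⊆ A ∧ MeasurableSet C ∧ 0 < μ C ∧ μ C < μ A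

theorem indicator_one_le_one {X : Type*} (E : Set X) (x : X) : E.indicator (1 : X → ℝ) x ≤ 1 :=
  indicator_apply_le' (fun _ => le_rfl) fun _ => zero_le_one

section

variable {X : Type*} [MeasurableSpace X] {μ : Measure X}

theorem exists_subset_measureReal_le_two_mul [IsFiniteMeasure μ] (R : Set X) {r : ℝ} (hr : 0 ≤ r) :
    ∃ C ⊆ R, MeasurableSet C ∧ μ.real C ≤ r ∧
      ∀ C' ⊆ R, MeasurableSet C' → μ.real C' ≤ r → μ.real C' ≤ 2 * μ.real C := by
  set G : Set ℝ := {m | ∃ C ⊆ R, MeasurableSet C ∧ μ.real C ≤ r ∧ μ.real C = m}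
  have hG0 : (0 : ℝ) ∈ G := ⟨∅, empty_subset R, .empty, by simpa using hr, by simp⟩
  have hGbdd : BddAbove G := ⟨μ.real univ, by
    rintro _ ⟨C, -, -, -, rfl⟩
    exact measureReal_mono (subset_univ C)⟩
  have hle : ∀ C' ⊆ R, MeasurableSet C' → μ.real C' ≤ r → μ.real C' ≤ sSup G :=
    fun C' hC'R hC' hC'r => le_csSup hGbdd ⟨C', hC'R, hC', hC'r, rfl⟩
  rcases le_or_gt (sSup G) 0 with hG | hG
  · refine ⟨∅, empty_subset R, .empty, by simpa using hr, fun C' hC'R hC' hC'r => ?_⟩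
    simpa using (hle C' hC'R hC' hC'r).trans hG
  · obtain ⟨_, ⟨C, hCR, hC, hCr, rfl⟩, hCG⟩ := exists_lt_of_lt_csSup ⟨0, hG0⟩ (half_lt_self hG)
    exact ⟨C, hCR, hC, hCr, fun C' hC'R hC' hC'r => by linarith [hle C' hC'R hC' hC'r]⟩

theorem IsNonatomic.exists_subset_measureReal_pos_le_half [IsFiniteMeasure μ]
    (hμ : IsNonatomic μ) {A : Set X} (hA : MeasurableSet A) (hA0 : 0 < μ.real A) :
    ∃ C ⊆ A, MeasurableSet C ∧ 0 < μ.real C ∧ μ.real C ≤ μ.real A / 2 := by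
  obtain ⟨C, hCA, hC, hC0, hCA'⟩ := hμ A hA (ENNReal.toReal_pos_iff.1 hA0).1
  have hsplit : μ.real (A ∩ C) + μ.real (A \ C) = μ.real A := measureReal_inter_add_sdiff hC
  rw [inter_eq_self_of_subset_right hCA] at hsplit
  have hC0' : 0 < μ.real C := ENNReal.toReal_pos hC0.ne' (measure_ne_top μ C)
  have hCA'' : μ.real C < μ.real A := (ENNReal.toReal_lt_toReal (measure_ne_top μ C)
    (measure_ne_top μ A)).2 hCA'
  rcases le_total (μ.real C) (μ.real (A \ C)) with h | h
  · exact ⟨C, hCA, hC, hC0', by linarith⟩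
  · exact ⟨A \ C, sdiff_subset, hA.diff hC, by linarith, by linarith⟩

theorem IsNonatomic.exists_subset_measureReal_pos_le [IsFiniteMeasure μ]
    (hμ : IsNonatomic μ) {A : Set X} (hA : MeasurableSet A) (hA0 : 0 < μ.real A)
    {ε : ℝ} (hε : 0 < ε) :
    ∃ C ⊆ A, MeasurableSet C ∧ 0 < μ.real C ∧ μ.real C ≤ ε := by
  have halving : ∀ n : ℕ, ∃ C ⊆ A, MeasurableSet C ∧ 0 < μ.real C ∧
      μ.real C ≤ μ.real A * (1 / 2) ^ n := by
    intro n
    induction n with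
    | zero => exact ⟨A, subset_rfl, hA, hA0, by simp⟩
    | succ n ih =>
      obtain ⟨C, hCA, hC, hC0, hCn⟩ := ih
      obtain ⟨D, hDC, hD, hD0, hDC'⟩ := hμ.exists_subset_measureReal_pos_le_half hC hC0
      exact ⟨D, hDC.trans hCA, hD, hD0, by rw [pow_succ]; linarith⟩
  obtain ⟨n, hn⟩ := exists_pow_lt_of_lt_one (div_pos hε hA0) one_half_lt_one
  obtain ⟨C, hCA, hC, hC0, hCn⟩ := halving n
  refine ⟨C, hCA, hC, hC0, hCn.trans ?_⟩
  rw [lt_div_iff₀ hA0] at hn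
  linarith

theorem IsNonatomic.exists_subset_measureReal_eq [IsFiniteMeasure μ]
    (hμ : IsNonatomic μ) {A : Set X} (hA : MeasurableSet A) {t : ℝ} (ht : 0 ≤ t)
    (htA : t ≤ μ.real A) :
    ∃ B ⊆ A, MeasurableSet B ∧ μ.real B = t := by
  -- Greedy exhaustion: each step adds a set of at least half the largest measure that still
  -- fits below `t`.
  choose! next hnextA hnext hnextt hnextmax using fun (B : Set X) (hB : μ.real B ≤ t) =>
    exists_subset_measureReal_le_two_mul (μ := μ) (A \ B) (sub_nonneg.2 hB)
  have hadd : ∀ B, μ.real B ≤ t → μ.real (B ∪ next B) = μ.real B + μ.real (next B) :=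
    fun B hB => measureReal_union (disjoint_sdiff_right.mono_right (hnextA B hB)) (hnext B hB)
  set g : ℕ → Set X := fun n => (fun B => B ∪ next B)^[n] ∅
  have hg_succ : ∀ n, g (n + 1) = g n ∪ next (g n) := fun n =>
    Function.iterate_succ_apply' _ n ∅
  have hg : ∀ n, g n ⊆ A ∧ MeasurableSet (g n) ∧ μ.real (g n) ≤ t := by
    intro n
    induction n with
    | zero => exact ⟨empty_subset A, .empty, by simpa [g] using ht⟩
    | succ n ih =>
      obtain ⟨hgA, hgm, hgt⟩ := ih
      rw [hg_succ, hadd _ hgt]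
      exact ⟨union_subset hgA ((hnextA _ hgt).trans sdiff_subset), hgm.union (hnext _ hgt),
        by linarith [hnextt _ hgt]⟩
  have hmono : Monotone g := monotone_nat_of_le_succ fun n => (hg_succ n).symm ▸ subset_union_left
  set B := ⋃ n, g n
  have hBA : B ⊆ A := iUnion_subset fun n => (hg n).1
  have hB : MeasurableSet B := .iUnion fun n => (hg n).2.1
  have hlim : Tendsto (fun n => μ.real (g n)) atTop (𝓝 (μ.real B)) :=
    (ENNReal.tendsto_toReal (measure_ne_top μ B)).comp (tendsto_measure_iUnion_atTop hmono)
  have hBt : μ.real B ≤ t := le_of_tendsto' hlim fun n => (hg n).2.2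
  refine ⟨B, hBA, hB, le_antisymm hBt (not_lt.1 fun hBt' => ?_)⟩
  have hnext_lim : Tendsto (fun n => μ.real (next (g n))) atTop (𝓝 0) := by
    have h := (hlim.comp (tendsto_add_atTop_nat 1)).sub hlim
    rw [sub_self] at h
    refine h.congr fun n => ?_
    simp only [Function.comp_apply, hg_succ, hadd _ (hg n).2.2]
    ring
  -- A piece of the leftover that fits into the remaining room is a candidate at every step,
  -- so the greedy choices cannot become small.
  have hleft : 0 < μ.real (A \ B) := by rw [measureReal_sdiff hBA hB]; linarith
  obtain ⟨C, hCA, hC, hC0, hCt⟩ :=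
    hμ.exists_subset_measureReal_pos_le (hA.diff hB) hleft (sub_pos.2 hBt')
  have hCle : ∀ n, μ.real C ≤ 2 * μ.real (next (g n)) := fun n =>
    hnextmax _ (hg n).2.2 C (hCA.trans (sdiff_subset_sdiff_right (subset_iUnion g n))) hC
      (by linarith [measureReal_mono (μ := μ) (subset_iUnion g n)])
  linarith [ge_of_tendsto' (hnext_lim.const_mul 2) hCle]

theorem IsNonatomic.exists_subset_halving [IsFiniteMeasure μ]
    (hμ : IsNonatomic μ) (𝒮 : Finset (Set X)) (h𝒮 : ∀ S ∈ 𝒮, MeasurableSet S)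
    {E : Set X} (hE : MeasurableSet E) :
    ∃ B ⊆ E, MeasurableSet B ∧ μ.real B = μ.real E / 2 ∧
      ∀ S ∈ 𝒮, μ.real (B ∩ S) = μ.real (E ∩ S) / 2 := by
  classical
  induction 𝒮 using Finset.induction_on generalizing E with
  | empty =>
    obtain ⟨B, hBE, hB, hBμ⟩ := hμ.exists_subset_measureReal_eq hE
      (by positivity) (half_le_self measureReal_nonneg)
    exact ⟨B, hBE, hB, hBμ, by simp⟩
  | insert S 𝒮 _ ih =>
    have hS : MeasurableSet S := h𝒮 S (Finset.mem_insert_self S 𝒮)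
    have h𝒮' : ∀ T ∈ 𝒮, MeasurableSet T := fun T hT => h𝒮 T (Finset.mem_insert_of_mem hT)
    obtain ⟨B₁, hB₁E, hB₁, hB₁μ, hB₁𝒮⟩ := ih h𝒮' (hE.inter hS)
    obtain ⟨B₂, hB₂E, hB₂, hB₂μ, hB₂𝒮⟩ := ih h𝒮' (hE.diff hS)
    have hdisj : Disjoint B₁ B₂ := disjoint_sdiff_inter.symm.mono hB₁E hB₂E
    have hsplit : ∀ T, MeasurableSet T →
        μ.real ((B₁ ∪ B₂) ∩ T) = μ.real (B₁ ∩ T) + μ.real (B₂ ∩ T) := fun T hT => by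
      rw [union_inter_distrib_right]
      exact measureReal_union (hdisj.mono inter_subset_left inter_subset_left) (hB₂.inter hT)
    have hE_split : ∀ T, μ.real (E ∩ S ∩ T) + μ.real ((E \ S) ∩ T) = μ.real (E ∩ T) := fun T => by
      rw [inter_right_comm, ← inter_sdiff_right_comm]
      exact measureReal_inter_add_sdiff hS
    refine ⟨B₁ ∪ B₂, union_subset (hB₁E.trans inter_subset_left) (hB₂E.trans sdiff_subset),
      hB₁.union hB₂, ?_, fun T hT => ?_⟩
    · rw [measureReal_union hdisj hB₂, hB₁μ, hB₂μ, ← measureReal_inter_add_sdiff (s := E) hS]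
      ring
    rw [hsplit T (h𝒮 T hT)]
    rcases Finset.mem_insert.1 hT with rfl | hT
    · rw [inter_eq_self_of_subset_left (hB₁E.trans inter_subset_right),
        (disjoint_sdiff_left.mono_left hB₂E).inter_eq, measureReal_empty, add_zero, hB₁μ]
    · rw [hB₁𝒮 T hT, hB₂𝒮 T hT, ← hE_split]
      ring

theorem lipschitzWith_integral_mul {s : X → ℝ} {C : ℝ≥0} (hs : AEStronglyMeasurable s μ)
    (hC : ∀ᵐ x ∂μ, ‖s x‖ ≤ C) :
    LipschitzWith C fun f : X →₁[μ] ℝ => ∫ x, s x * f x ∂μ := by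
  refine LipschitzWith.of_dist_le_mul fun f g => ?_
  have hint : ∀ f : X →₁[μ] ℝ, Integrable (fun x => s x * f x) μ := fun f =>
    (L1.integrable_coeFn f).bdd_mul hs hC
  rw [Real.dist_eq, ← Real.norm_eq_abs, ← integral_sub (hint f) (hint g), dist_eq_norm,
    L1.norm_eq_integral_norm, ← integral_const_mul]
  refine norm_integral_le_of_norm_le ((L1.integrable_coeFn (f - g)).norm.const_mul C) ?_
  filter_upwards [hC, Lp.coeFn_sub f g] with x hCx hfg
  rw [hfg, Pi.sub_apply, ← mul_sub, norm_mul]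
  exact mul_le_mul_of_nonneg_right hCx (norm_nonneg _)

theorem integral_mul_indicator_const (s : X → ℝ) {A : Set X} (hA : MeasurableSet A) (c : ℝ) :
    ∫ x, s x * A.indicator (fun _ => c) x ∂μ = (∫ x in A, s x ∂μ) * c := by
  simp_rw [← indicator_mul_right, integral_indicator hA, integral_mul_const]

theorem isClosed_setOf_tendsto_integral_mul {ι : Type*} {l : Filter ι} {s : ι → X → ℝ}
    {C : ℝ≥0} (hs : ∀ k, AEStronglyMeasurable (s k) μ) (hC : ∀ k, ∀ᵐ x ∂μ, ‖s k x‖ ≤ C) :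
    IsClosed {f : X →₁[μ] ℝ | Tendsto (fun k => ∫ x, s k x * f x ∂μ) l (𝓝 0)} :=
  (LipschitzWith.uniformEquicontinuous _ C fun k => lipschitzWith_integral_mul (hs k) (hC k)
    ).equicontinuous.isClosed_setOfPred_tendsto continuous_const

theorem tendsto_integral_mul_of_dense [IsFiniteMeasure μ] {ι : Type*} {l : Filter ι}
    {s : ι → X → ℝ} {C : ℝ≥0} (hs : ∀ k, AEStronglyMeasurable (s k) μ)
    (hC : ∀ k, ∀ᵐ x ∂μ, ‖s k x‖ ≤ C)
    {S : ℕ → Set X} (hSm : ∀ n, MeasurableSet (S n))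
    (hS : ∀ A, MeasurableSet A → ∀ ε : ℝ≥0∞, 0 < ε → ∃ n, μ (A ∆ S n) < ε)
    (hsS : ∀ n, Tendsto (fun k => ∫ x in S n, s k x ∂μ) l (𝓝 0))
    {w : X → ℝ} (hw : Integrable w μ) :
    Tendsto (fun k => ∫ x, s k x * w x ∂μ) l (𝓝 0) := by
  set F := {f : X →₁[μ] ℝ | Tendsto (fun k => ∫ x, s k x * f x ∂μ) l (𝓝 0)}
  have hF : IsClosed F := isClosed_setOf_tendsto_integral_mul hs hC
  have hindicator : ∀ A (hA : MeasurableSet A) (c : ℝ),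
      Tendsto (fun k => ∫ x, s k x * A.indicator (fun _ => c) x ∂μ) l (𝓝 0) ↔
        indicatorConstLp 1 hA (measure_ne_top μ A) c ∈ F := fun A hA c => by
    refine tendsto_congr fun k => integral_congr_ae ?_
    filter_upwards [indicatorConstLp_coeFn (p := 1) (hs := hA) (hμs := measure_ne_top μ A) (c := c)]
      with x hx
    rw [hx]
  have hSF : ∀ n c, indicatorConstLp 1 (hSm n) (measure_ne_top μ (S n)) c ∈ F := fun n c => by
    rw [← hindicator]
    simpa [integral_mul_indicator_const _ (hSm n)] using (hsS n).mul_const c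
  have hAF : ∀ A (hA : MeasurableSet A) c, indicatorConstLp 1 hA (measure_ne_top μ A) c ∈ F := by
    intro A hA c
    choose n hn using fun j : ℕ =>
      hS A hA (j : ℝ≥0∞)⁻¹ (ENNReal.inv_pos.2 (ENNReal.natCast_ne_top j))
    have hlim : Tendsto (fun j => μ (S (n j) ∆ A)) atTop (𝓝 0) :=
      tendsto_of_tendsto_of_tendsto_of_le_of_le tendsto_const_nhds ENNReal.tendsto_inv_nat_nhds_zero
        (fun _ => zero_le) fun j => symmDiff_comm A (S (n j)) ▸ (hn j).le
    exact hF.mem_of_tendsto (tendsto_indicatorConstLp_set ENNReal.one_ne_top hlim)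
      (Eventually.of_forall fun j => hSF (n j) c)
  refine Integrable.induction (P := fun w => Tendsto (fun k => ∫ x, s k x * w x ∂μ) l (𝓝 0))
    (fun c A hA _ => (hindicator A hA c).2 (hAF A hA c)) ?_ hF ?_ hw
  · intro f g _ hf hg hf0 hg0
    have hfg0 := hf0.add hg0
    rw [add_zero] at hfg0
    refine hfg0.congr fun k => ?_
    rw [← integral_add (hf.bdd_mul (hs k) (hC k)) (hg.bdd_mul (hs k) (hC k))]
    simp only [Pi.add_apply, mul_add]
  · intro f g hfg _ hf0
    refine hf0.congr fun k => integral_congr_ae ?_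
    filter_upwards [hfg] with x hx
    rw [hx]

theorem IsNonatomic.exists_tendsto_integral_mul_zero [IsFiniteMeasure μ]
    (hμ : IsNonatomic μ) {S : ℕ → Set X} (hSm : ∀ n, MeasurableSet (S n))
    (hS : ∀ A, MeasurableSet A → ∀ ε : ℝ≥0∞, 0 < ε → ∃ n, μ (A ∆ S n) < ε)
    {E : Set X} (hE : MeasurableSet E) :
    ∃ s : ℕ → X → ℝ, (∀ k, Measurable (s k)) ∧ (∀ k x, |s k x| = E.indicator 1 x) ∧
      ∀ w, Integrable w μ → Tendsto (fun k => ∫ x, s k x * w x ∂μ) atTop (𝓝 0) := by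
  choose B hBE hB _ hBS using fun k => hμ.exists_subset_halving ((Finset.range k).image S)
    (by simp [hSm]) hE
  set s : ℕ → X → ℝ := fun k x => (B k).indicator (fun _ => 2) x - E.indicator (fun _ => 1) x
  have hs : ∀ k, Measurable (s k) := fun k =>
    (measurable_const.indicator (hB k)).sub (measurable_const.indicator hE)
  have hs_abs : ∀ k x, |s k x| = E.indicator 1 x := by
    intro k x
    by_cases hxB : x ∈ B k
    · simp [s, hxB, hBE k hxB]
      norm_num
    · by_cases hxE : x ∈ E <;> simp [s, hxB, hxE]
  have hs_le : ∀ k x, ‖s k x‖ ≤ (1 : ℝ≥0) := fun k x =>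
    (hs_abs k x).trans_le (indicator_one_le_one E x)
  refine ⟨s, hs, hs_abs, fun w hw => tendsto_integral_mul_of_dense
    (fun k => (hs k).aestronglyMeasurable) (fun k => .of_forall (hs_le k)) hSm hS
    (fun n => tendsto_const_nhds.congr' ?_) hw⟩
  filter_upwards [eventually_gt_atTop n] with k hk
  rw [integral_sub ((integrable_const _).indicator (hB k)) ((integrable_const _).indicator hE),
    integral_indicator_const _ (hB k), integral_indicator_const _ hE,
    measureReal_restrict_apply (hB k), measureReal_restrict_apply hE,
    hBS k (S n) (Finset.mem_image_of_mem S (Finset.mem_range.2 hk))]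
  simp only [smul_eq_mul]
  ring

theorem exists_pos_measure_setOf_add_le_le_sub {f : X → ℝ} {α β : ℝ}
    (h : 0 < μ {x | α < f x ∧ f x < β}) :
    ∃ c > 0, 0 < μ {x | α + c ≤ f x ∧ f x ≤ β - c} := by
  by_contra! hnull
  have hcover : {x | α < f x ∧ f x < β} ⊆
      ⋃ n : ℕ, {x | α + 1 / (n + 1) ≤ f x ∧ f x ≤ β - 1 / (n + 1)} := by
    rintro x ⟨hαx, hxβ⟩
    obtain ⟨n, hn⟩ := exists_nat_one_div_lt (lt_min (sub_pos.2 hαx) (sub_pos.2 hxβ))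
    exact mem_iUnion.2 ⟨n, by linarith [min_le_left (f x - α) (β - f x)],
      by linarith [min_le_right (f x - α) (β - f x)]⟩
  exact h.ne' (measure_mono_null hcover (measure_iUnion_null fun n =>
    nonpos_iff_eq_zero.1 (hnull _ Nat.one_div_pos_of_nat)))

theorem add_mul_mem_Uad {α β c ρ : ℝ} {u s : X → ℝ} {E : Set X} (hu : u ∈ Uad μ α β)
    (hs : Measurable s) (hsE : ∀ x, |s x| ≤ E.indicator 1 x)
    (hE : E ⊆ {x | α + c ≤ u x ∧ u x ≤ β - c}) (hρ : 0 ≤ ρ) (hρc : ρ ≤ c) :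
    (fun x => u x + ρ * s x) ∈ Uad μ α β := by
  refine ⟨hu.1.add (measurable_const.mul hs), ?_⟩
  filter_upwards [hu.2] with x hx
  by_cases hxE : x ∈ E
  · have hs1 : |s x| ≤ 1 := by simpa [hxE] using hsE x
    have hρs : |ρ * s x| ≤ c := by
      rw [abs_mul, abs_of_nonneg hρ]
      nlinarith [abs_nonneg (s x)]
    have := hE hxE
    constructor <;> linarith [abs_le.1 hρs, this.1, this.2]
  · have hs0 : s x = 0 := abs_nonpos_iff.1 (by simpa [hxE] using hsE x)
    simpa [hs0] using hx

theorem integrable_mul_of_mem_Uad {α β : ℝ} {u w : X → ℝ} (hu : u ∈ Uad μ α β)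
    (hw : Integrable w μ) : Integrable (fun x => u x * w x) μ :=
  hw.bdd_mul hu.1.aestronglyMeasurable (by
    filter_upwards [hu.2] with x hx using
      (Real.norm_eq_abs _).trans_le (abs_le_max_abs_abs hx.1 hx.2))

theorem tendsto_integral_add_mul_mul {α β ρ : ℝ} {C : ℝ≥0} {u : X → ℝ} {s : ℕ → X → ℝ}
    (hu : u ∈ Uad μ α β) (hs : ∀ k, AEStronglyMeasurable (s k) μ)
    (hC : ∀ k, ∀ᵐ x ∂μ, ‖s k x‖ ≤ C)
    (hs0 : ∀ w, Integrable w μ → Tendsto (fun k => ∫ x, s k x * w x ∂μ) atTop (𝓝 0))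
    {w : X → ℝ} (hw : Integrable w μ) :
    Tendsto (fun k => ∫ x, (u x + ρ * s k x) * w x ∂μ) atTop (𝓝 (∫ x, u x * w x ∂μ)) := by
  have h := ((hs0 w hw).const_mul ρ).const_add (∫ x, u x * w x ∂μ)
  rw [mul_zero, add_zero] at h
  refine h.congr fun k => ?_
  rw [← integral_const_mul, ← integral_add (integrable_mul_of_mem_Uad hu hw)
    ((hw.bdd_mul (hs k) (hC k)).const_mul ρ)]
  simp only [add_mul, mul_assoc]

theorem toReal_eLpNorm_indicator_const_pos [IsFiniteMeasure μ] {E : Set X} (hE : MeasurableSet E)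
    (hE0 : μ E ≠ 0) {c : ℝ} (hc : c ≠ 0) {p : ℝ≥0∞} (hp : p ≠ 0) :
    0 < (eLpNorm (E.indicator fun _ => c) p μ).toReal := by
  rw [eLpNorm_indicator_const' hE hE0 hp]
  have hμE : μ E ^ (1 / p.toReal) ≠ 0 :=
    (ENNReal.rpow_pos (pos_iff_ne_zero.2 hE0) (measure_ne_top μ E)).ne'
  exact ENNReal.toReal_pos (mul_ne_zero (enorm_ne_zero.2 hc) hμE)
    (ENNReal.mul_ne_top enorm_ne_top
      (ENNReal.rpow_ne_top_of_nonneg (by positivity) (measure_ne_top μ E)))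

end

theorem no_polynomial_growth_for_non_bang_bang_general
    {X : Type*} [MeasurableSpace X] (μ : Measure X) [IsFiniteMeasure μ]
    (hseparable : ∃ S : ℕ → Set X, (∀ n, MeasurableSet (S n)) ∧
      ∀ A : Set X, MeasurableSet A → ∀ ε : ℝ≥0∞, 0 < ε →
        ∃ n, μ ((A \ S n) ∪ (S n \ A)) < ε)
    (hnonatomic : ∀ A : Set X, MeasurableSet A → 0 < μ A →
      ∃ C, C ⊆ A ∧ MeasurableSet C ∧ 0 < μ C ∧ μ C < μ A)
    (α β : ℝ)
    (J : (X → ℝ) → ℝ)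
    (hJcont : ∀ (u : ℕ → X → ℝ) (v : X → ℝ), (∀ k, u k ∈ Uad μ α β) → v ∈ Uad μ α β →
      (∀ w : X → ℝ, Integrable w μ →
        Tendsto (fun k => ∫ x, u k x * w x ∂μ) atTop (𝓝 (∫ x, v x * w x ∂μ))) →
      Tendsto (fun k => J (u k)) atTop (𝓝 (J v)))
    (ubar : X → ℝ) (hubar : ubar ∈ Uad μ α β)
    (hnbb : 0 < μ {x | α < ubar x ∧ ubar x < β}) :
    ¬ ∃ ν > (0:ℝ), ∃ δ > (0:ℝ), ∃ γ > (0:ℝ), ∃ p : ℝ≥0∞, 1 ≤ p ∧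
      ∀ u ∈ Uad μ α β, (∫ x, |u x - ubar x| ∂μ) < δ →
        J ubar + ν * ((eLpNorm (fun x => u x - ubar x) p μ).toReal) ^ γ ≤ J u := by
  rintro ⟨ν, hν, δ, hδ, γ, hγ, p, hp, hgrowth⟩
  obtain ⟨S, hSm, hS⟩ := hseparable
  obtain ⟨c, hc, hE0⟩ := exists_pos_measure_setOf_add_le_le_sub hnbb
  set E := {x | α + c ≤ ubar x ∧ ubar x ≤ β - c}
  have hE : MeasurableSet E :=
    (measurableSet_le measurable_const hubar.1).inter (measurableSet_le hubar.1 measurable_const)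
  obtain ⟨s, hs, hs_abs, hs0⟩ := IsNonatomic.exists_tendsto_integral_mul_zero hnonatomic hSm hS hE
  obtain ⟨ρ₀, hρ₀, hρ₀δ⟩ := exists_pos_mul_lt hδ (μ.real E)
  set ρ := min c ρ₀
  have hρ : 0 < ρ := lt_min hc hρ₀
  set u : ℕ → X → ℝ := fun k x => ubar x + ρ * s k x
  have hu : ∀ k, u k ∈ Uad μ α β := fun k =>
    add_mul_mem_Uad hubar (hs k) (fun x => (hs_abs k x).le) subset_rfl hρ.le (min_le_left c ρ₀)
  have hdiff : ∀ k, (fun x => |u k x - ubar x|) = E.indicator fun _ => ρ := fun k => by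
    ext x
    simp [u, abs_mul, abs_of_pos hρ, hs_abs, indicator_apply]
  have hL1 : ∀ k, ∫ x, |u k x - ubar x| ∂μ < δ := fun k => by
    rw [hdiff, integral_indicator_const _ hE, smul_eq_mul]
    exact (mul_le_mul_of_nonneg_left (min_le_right c ρ₀) measureReal_nonneg).trans_lt hρ₀δ
  have hLp : ∀ k, eLpNorm (fun x => u k x - ubar x) p μ = eLpNorm (E.indicator fun _ => ρ) p μ :=
    fun k => eLpNorm_congr_norm_ae (.of_forall fun x => by
      rw [Real.norm_eq_abs, Real.norm_eq_abs, ← congrFun (hdiff k) x, abs_abs])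
  have hK := toReal_eLpNorm_indicator_const_pos hE hE0.ne' hρ.ne' (zero_lt_one.trans_le hp).ne'
  have hJ := hJcont u ubar hu hubar fun w hw => tendsto_integral_add_mul_mul hubar
    (fun k => (hs k).aestronglyMeasurable) (C := 1)
    (fun k => .of_forall fun x => (hs_abs k x).trans_le (indicator_one_le_one E x)) hs0 hw
  obtain ⟨k, hk⟩ := (hJ.eventually_lt_const
    (lt_add_of_pos_right (J ubar) (mul_pos hν (Real.rpow_pos_of_pos hK γ)))).exists
  linarith [hLp k ▸ hgrowth (u k) (hu k) (hL1 k)]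

/-- for a non-bang-bang local `L¹`-minimizer of a weak* sequentially continuous
functional, no local growth of the form `J(u) ≥ J(ū) + ν‖u − ū‖_{L^p}^γ` can hold. -/
theorem no_polynomial_growth_for_non_bang_bang
    {X : Type*} [MeasurableSpace X] (μ : Measure X) [IsFiniteMeasure μ]
    (hcomplete : μ.IsComplete)
    (hseparable : ∃ S : ℕ → Set X, (∀ n, MeasurableSet (S n)) ∧
      ∀ A : Set X, MeasurableSet A → ∀ ε : ℝ≥0∞, 0 < ε →
        ∃ n, μ ((A \ S n) ∪ (S n \ A)) < ε)
    (hnonatomic : ∀ A : Set X, MeasurableSet A → 0 < μ A →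
      ∃ C, C ⊆ A ∧ MeasurableSet C ∧ 0 < μ C ∧ μ C < μ A)
    (α β : ℝ) (hαβ : α < β)
    (J : (X → ℝ) → ℝ)
    (hJcont : ∀ (u : ℕ → X → ℝ) (v : X → ℝ), (∀ k, u k ∈ Uad μ α β) → v ∈ Uad μ α β →
      (∀ w : X → ℝ, Integrable w μ →
        Tendsto (fun k => ∫ x, u k x * w x ∂μ) atTop (𝓝 (∫ x, v x * w x ∂μ))) →
      Tendsto (fun k => J (u k)) atTop (𝓝 (J v)))
    (ubar : X → ℝ) (hubar : ubar ∈ Uad μ α β)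
    (hmin : ∃ r > (0:ℝ), ∀ u ∈ Uad μ α β, (∫ x, |u x - ubar x| ∂μ) < r → J ubar ≤ J u)
    (hnbb : 0 < μ {x | α < ubar x ∧ ubar x < β}) :
    ¬ ∃ ν > (0:ℝ), ∃ δ > (0:ℝ), ∃ γ > (0:ℝ), ∃ p : ℝ≥0∞, 1 ≤ p ∧
      ∀ u ∈ Uad μ α β, (∫ x, |u x - ubar x| ∂μ) < δ →
        J ubar + ν * ((eLpNorm (fun x => u x - ubar x) p μ).toReal) ^ γ ≤ J u :=
  no_polynomial_growth_for_non_bang_bang_general μ hseparable hnonatomic α β J hJcont ubar hubar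
    hnbb
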